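/- arXiv:2211.02993 — 5 statements merged into one kernel-verified Lean document; each statement's English description precedes it below -/
import Mathlib

section
/- For a strictly decreasing word w containing both letters x and x−1, the word (x−1)·w is Hecke-equivalent to w·x. -/
/-- Elementary 0-Hecke relations on words. -/
inductive HeckeRel : List ℕ → List ℕ → Prop
  | idem (i : ℕ) : HeckeRel [i, i] [i]
  | braid (i : ℕ) : HeckeRel [i, i+1, i] [i+1, i, i+1]
  | comm (i j : ℕ) (h : i + 2 ≤ j ∨ j + 2 ≤ i) : HeckeRel [i, j] [j, i]

/-- Hecke equivalence: the congruence on words generated by the 0-Hecke relations. -/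
inductive HeckeEquiv : List ℕ → List ℕ → Prop
  | of {a b : List ℕ} : HeckeRel a b → HeckeEquiv a b
  | refl (a : List ℕ) : HeckeEquiv a a
  | symm {a b : List ℕ} : HeckeEquiv a b → HeckeEquiv b a
  | trans {a b c : List ℕ} : HeckeEquiv a b → HeckeEquiv b c → HeckeEquiv a c
  | append_congr {a b c d : List ℕ} :
      HeckeEquiv a b → HeckeEquiv c d → HeckeEquiv (a ++ c) (b ++ d)

/-- The permutation of `ℕ` associated to a word (letter `i` ↦ the simple
transposition swapping `i` and `i+1`). -/
def wordPerm (a : List ℕ) : Equiv.Perm ℕ := (a.map fun i => Equiv.swap i (i + 1)).prod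

/-- A word on the alphabet of positive integers. -/
def IsPosWord (a : List ℕ) : Prop := ∀ x ∈ a, 0 < x

/-- `a` is a reduced word of the permutation `w`: it represents `w` and has
minimum length among words representing `w`. -/
def IsReducedWordOf (w : Equiv.Perm ℕ) (a : List ℕ) : Prop :=
  IsPosWord a ∧ wordPerm a = w ∧
    ∀ b : List ℕ, IsPosWord b → wordPerm b = w → a.length ≤ b.length

/-- `a` is a Hecke word for `w`: it is Hecke-equivalent to a reduced word of `w`. -/
def IsHeckeWord (w : Equiv.Perm ℕ) (a : List ℕ) : Prop :=
  IsPosWord a ∧ ∃ b, IsReducedWordOf w b ∧ HeckeEquiv a b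

/-- A word is reduced if it has minimum length in its Hecke-equivalence class. -/
def IsReducedWord (a : List ℕ) : Prop := ∀ b, HeckeEquiv a b → a.length ≤ b.length

/-- The `i`-th row (1-indexed) of a tableau presented as a list of rows. -/
def RowOf (T : List (List ℕ)) (i : ℕ) : List ℕ := T.getD (i - 1) []

/-- A decreasing tableau: nonempty rows of positive integers of weakly decreasing
lengths, strictly decreasing along rows and down columns. -/
def IsDecreasingTableau (T : List (List ℕ)) : Prop :=
  (∀ R ∈ T, R ≠ []) ∧
  (∀ R ∈ T, ∀ x ∈ R, 0 < x) ∧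
  (∀ R ∈ T, R.Chain' (fun x y => y < x)) ∧
  T.Chain' (fun R S => S.length ≤ R.length ∧ ∀ j < S.length, S.getD j 0 < R.getD j 0)

/-- The shape of a tableau: the list of its row lengths. -/
def shape (T : List (List ℕ)) : List ℕ := T.map List.length

/-- `(r,c)` (1-indexed, matrix style) is a removable cell of `T`: the cell at the
end of row `r` and at the bottom of column `c`. -/
def IsRemovable (T : List (List ℕ)) (r c : ℕ) : Prop :=
  1 ≤ r ∧ r ≤ T.length ∧ 1 ≤ c ∧ (RowOf T r).length = c ∧ (RowOf T (r + 1)).length < c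

/-- Ejectability (recursive): `x` is ejectable in `T` if `x` is in the first row of
`T` and either `x-1` is not in the first row, or it is and `x-1` is ejectable in
the tableau with the first row removed. -/
def Ejectable : List (List ℕ) → ℕ → Prop
  | [], _ => False
  | R :: rest, x => x ∈ R ∧ (x - 1 ∉ R ∨ Ejectable rest (x - 1))

/-- Boolean version of ejectability, used inside the algorithms. -/
def ejectableB : List (List ℕ) → ℕ → Bool
  | [], _ => false
  | R :: rest, x => R.contains x && (!(R.contains (x - 1)) || ejectableB rest (x - 1))

/-- Smallest ejectable value `x` in `T` with `lo < x < hi`, if any. -/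
def smallestEjectableBetween (T : List (List ℕ)) (lo hi : ℕ) : Option ℕ :=
  ((T.headD []).filter fun x => ejectableB T x && decide (lo < x) && decide (x < hi)).min?

/-- Largest ejectable value `x` in `T` with `lo < x < hi`, if any. -/
def largestEjectableBetween (T : List (List ℕ)) (lo hi : ℕ) : Option ℕ :=
  ((T.headD []).filter fun x => ejectableB T x && decide (lo < x) && decide (x < hi)).max?

/-- Replace all occurrences of `old` by `new` in a row. -/
def replaceVal (R : List ℕ) (old new : ℕ) : List ℕ :=
  R.map fun y => if y = old then new else y

/-- One step of the reverse insertion Ψ at a row `R`, given the already-processed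
lower tableau `B = P'_{>i}`, the value `m1 = m_{i+1}` and flag `a1 = α_{i+1}`.
Returns the new row, the value `m_i` and the flag `α_i`. -/
def psiRowStep (R : List ℕ) (B : List (List ℕ)) (m1 : ℕ) (a1 : Bool) :
    List ℕ × ℕ × Bool :=
  let mi := ((R.filter fun y => decide (m1 < y)).min?).getD 0
  if R.contains (mi - 1) then (R, mi, a1)                        -- Dummy
  else if a1 && !(R.contains m1) then (replaceVal R mi m1, mi, true)  -- Direct Repl.
  else
    match smallestEjectableBetween B m1 mi with
    | some x => (replaceVal R mi x, mi, true)                    -- Indirect Repl.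
    | none => (R, mi, false)                                     -- No Replacement

/-- Process a list of rows (top part of the tableau) from bottom to top, on top of
the already-processed lower tableau `B`, with initial ejected value `m` and flag `a`.
Returns the full processed tableau together with the last ejected value and flag. -/
def psiRows : List (List ℕ) → List (List ℕ) → ℕ → Bool → List (List ℕ) × ℕ × Bool
  | [], B, m, a => (B, m, a)
  | R :: rest, B, m, a =>
    let s := psiRows rest B m a
    let t := psiRowStep R s.1 s.2.1 s.2.2
    (t.1 :: s.1, t.2.1, t.2.2)

/-- The part of the tableau below the processed rows, after the initialization step
of Ψ (for `α = 1` the removable cell at the end of row `r` is deleted). -/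
def psiBase (P : List (List ℕ)) (r : ℕ) (α : Bool) : List (List ℕ) :=
  if α then
    (if (RowOf P r).dropLast = [] then P.drop r else (RowOf P r).dropLast :: P.drop r)
  else P.drop r

/-- The rows of `P` to be processed by Ψ. -/
def psiUpper (P : List (List ℕ)) (r : ℕ) (α : Bool) : List (List ℕ) :=
  if α then P.take (r - 1) else P.take r

/-- The initial value `m_{r+1}` (for `α = 0`) or `m_r` (for `α = 1`) fed to Ψ. -/
def psiM (P : List (List ℕ)) (r : ℕ) (α : Bool) : ℕ :=
  if α then ((RowOf P r).getLast?).getD 0 else 0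

/-- The state of the reverse insertion Ψ on `(P, (r,·), α)` after processing row `i`:
the working tableau restricted to rows `≥ i` (i.e. `P'_{≥ i}`), the value `m_i`
ejected from row `i`, and the flag `α_i`. -/
def psiStage (P : List (List ℕ)) (r : ℕ) (α : Bool) (i : ℕ) :
    List (List ℕ) × ℕ × Bool :=
  psiRows ((psiUpper P r α).drop (i - 1)) (psiBase P r α) (psiM P r α) α

/-- The reverse insertion Ψ: input a decreasing tableau `P`, the row index `r` of a
removable cell, and `α ∈ {0,1}`; output the new tableau `P'` and the value `m`. -/
def psi (P : List (List ℕ)) (r : ℕ) (α : Bool) : List (List ℕ) × ℕ :=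
  ((psiStage P r α 1).1, (psiStage P r α 1).2.1)

/-- The forward insertion of a value `N` into a tableau (list of rows, processed
top-down). Returns the new tableau, the row and column (1-indexed) of the
terminating cell, and the flag `α`. -/
def phiRows : ℕ → List (List ℕ) → List (List ℕ) × ℕ × ℕ × Bool
  | N, [] => ([[N]], 1, 1, true)                                   -- T1 (new row)
  | N, R :: rest =>
    match (R.filter fun y => decide (y ≤ N)).max? with
    | none => ((R ++ [N]) :: rest, 1, R.length + 1, true)          -- T1 (append)
    | some n1 =>
      let R' := replaceVal R n1 N
      let j := R.idxOf n1
      let n2 := R.getD (j + 1) 0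
      if n1 = N && R.contains (N - 1) then                         -- Dummy
        let o := phiRows (N - 1) rest
        (R' :: o.1, o.2.1 + 1, o.2.2.1, o.2.2.2)
      else if decide (n1 < N) && !(ejectableB rest n1) then        -- Direct Repl.
        let o := phiRows n1 rest
        (R' :: o.1, o.2.1 + 1, o.2.2.1, o.2.2.2)
      else
        match largestEjectableBetween rest n2 n1 with
        | some y =>                                                -- IR1
          let o := phiRows y rest
          (R' :: o.1, o.2.1 + 1, o.2.2.1, o.2.2.2)
        | none =>
          if n2 = 0 then (R' :: rest, 1, j + 1, false)             -- T2
          else                                                     -- IR2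
            let o := phiRows n2 rest
            (R' :: o.1, o.2.1 + 1, o.2.2.1, o.2.2.2)

/-- The forward insertion Φ of `m` into the decreasing tableau `P`. -/
def phi (P : List (List ℕ)) (m : ℕ) : List (List ℕ) × ℕ × ℕ × Bool := phiRows m P

/-- Edelman–Greene reverse row insertion: process rows bottom-to-top, always
replacing `m_i` by `m_{i+1}`. -/
def egRows : List (List ℕ) → List (List ℕ) → ℕ → List (List ℕ) × ℕ
  | [], B, m => (B, m)
  | R :: rest, B, m =>
    let s := egRows rest B m
    let mi := ((R.filter fun y => decide (s.2 < y)).min?).getD 0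
    (replaceVal R mi s.2 :: s.1, mi)

/-- EG reverse row insertion at the removable cell in row `r` of `P`. -/
def egRev (P : List (List ℕ)) (r : ℕ) : List (List ℕ) × ℕ :=
  egRows (P.take (r - 1)) (psiBase P r true) (psiM P r true)

/-- The row reading word: rows from bottom to top, each left to right. -/
def rowWord (T : List (List ℕ)) : List ℕ := T.reverse.flatten

/-- The shape obtained by removing the cell at the end of row `r` (1-indexed). -/
def shapeMinus (sh : List ℕ) (r : ℕ) : List ℕ :=
  (sh.set (r - 1) (sh.getD (r - 1) 0 - 1)).filter fun n => decide (n ≠ 0)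

/-- The shape obtained by adding one cell at the end of row `r` (1-indexed). -/
def shapePlus (sh : List ℕ) (r : ℕ) : List ℕ :=
  if r ≤ sh.length then sh.set (r - 1) (sh.getD (r - 1) 0 + 1) else sh ++ [1]

/-- The bumping path of the removable cell `(r,c)` of `T`: `m r` is the entry at
`(r,c)`, and for `1 ≤ i < r`, `m i` is the smallest entry of row `i` of `T`
exceeding `m (i+1)`. -/
def IsBumpingPath (T : List (List ℕ)) (r c : ℕ) (m : ℕ → ℕ) : Prop :=
  m r = (RowOf T r).getD (c - 1) 0 ∧
  ∀ i, 1 ≤ i → i < r →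
    m i ∈ RowOf T i ∧ m (i + 1) < m i ∧ ∀ y ∈ RowOf T i, m (i + 1) < y → m i ≤ y

/-- A compatible pair of words `(a, i)`: same length, positive letters, `i` weakly
decreasing, and equal consecutive `i`-letters force strictly increasing `a`-letters. -/
def CompatiblePair (a i : List ℕ) : Prop :=
  a.length = i.length ∧ IsPosWord a ∧ IsPosWord i ∧
    (i.zip a).Chain' fun p q => q.1 ≤ p.1 ∧ (p.1 = q.1 → p.2 < q.2)

/-- A set-valued tableau (of partition shape, presented as a list of rows of
finite sets): nonempty sets of positive integers, `max ≤ min` along rows,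
`max < min` down columns. -/
def IsSVT (Q : List (List (Finset ℕ))) : Prop :=
  (∀ R ∈ Q, R ≠ []) ∧
  Q.Chain' (fun R S => S.length ≤ R.length) ∧
  (∀ R ∈ Q, ∀ S ∈ R, S.Nonempty ∧ ∀ x ∈ S, 0 < x) ∧
  (∀ R ∈ Q, R.Chain' fun S S' => ∀ x ∈ S, ∀ y ∈ S', x ≤ y) ∧
  Q.Chain' fun R S => ∀ j < S.length, ∀ x ∈ R.getD j ∅, ∀ y ∈ S.getD j ∅, x < y

/-- Record the value `k` in the recording tableau `Q` at cell `(r,c)`: in a new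
cell if `newCell = true`, otherwise adding `k` to the set already there. -/
def recordCell (Q : List (List (Finset ℕ))) (r c k : ℕ) (newCell : Bool) :
    List (List (Finset ℕ)) :=
  if newCell then
    (if r ≤ Q.length then Q.set (r - 1) (Q.getD (r - 1) [] ++ [{k}]) else Q ++ [[{k}]])
  else
    Q.set (r - 1)
      ((Q.getD (r - 1) []).set (c - 1) (insert k ((Q.getD (r - 1) []).getD (c - 1) ∅)))

/-- The insertion correspondence: insert the letters of `a` successively by Φ,
recording the insertion of `a_k` with the value `i_k`. -/
def tildePhi (a i : List ℕ) : List (List ℕ) × List (List (Finset ℕ)) :=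
  ((a.zip i).reverse).foldl
    (fun PQ x =>
      let o := phi PQ.1 x.1
      (o.1, recordCell PQ.2 o.2.1 o.2.2.1 x.2 o.2.2.2))
    ([], [])

/-- The weight (multiset of entries) of a set-valued tableau. -/
def svtWeight (Q : List (List (Finset ℕ))) : Multiset ℕ :=
  (Q.flatten.map Finset.val).sum

/-!
Strict decrease forces `w = A · x (x-1) · B` with every letter of `A` above `x` and every letter
of `B` below `x - 1`. The letter `x - 1` commutes through `A`, the braid relation turns
`(x-1) x (x-1)` into `x (x-1) x`, and the last `x` commutes through `B`.
-/

namespace HeckeEquiv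

theorem cons_equiv_append_singleton (k : ℕ) {A : List ℕ}
    (hA : ∀ a ∈ A, a + 2 ≤ k ∨ k + 2 ≤ a) : HeckeEquiv (k :: A) (A ++ [k]) := by
  induction A with
  | nil => exact refl _
  | cons a A ih =>
    have swap : HeckeEquiv ([k, a] ++ A) ([a, k] ++ A) :=
      append_congr (of (HeckeRel.comm k a (hA a List.mem_cons_self).symm)) (refl A)
    have shift : HeckeEquiv ([a] ++ k :: A) ([a] ++ (A ++ [k])) :=
      append_congr (refl [a]) (ih fun b hb => hA b (List.mem_cons_of_mem a hb))
    exact swap.trans shift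

theorem cons_equiv_append_succ (y : ℕ) {A B : List ℕ}
    (hA : ∀ a ∈ A, y + 1 < a) (hB : ∀ b ∈ B, b < y) :
    HeckeEquiv (y :: (A ++ (y + 1) :: y :: B)) (A ++ (y + 1) :: y :: B ++ [y + 1]) := by
  have pass_A : HeckeEquiv (y :: A ++ [y + 1, y] ++ B) (A ++ [y] ++ [y + 1, y] ++ B) :=
    append_congr
      (append_congr (cons_equiv_append_singleton y fun a ha => Or.inr (hA a ha)) (refl _))
      (refl B)
  have braid : HeckeEquiv (A ++ ([y, y + 1, y] ++ B)) (A ++ ([y + 1, y, y + 1] ++ B)) :=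
    append_congr (refl A) (append_congr (of (HeckeRel.braid y)) (refl B))
  have pass_B :
      HeckeEquiv (A ++ [y + 1, y] ++ ((y + 1) :: B)) (A ++ [y + 1, y] ++ (B ++ [y + 1])) :=
    append_congr (refl _)
      (cons_equiv_append_singleton (y + 1) fun b hb => Or.inl (by have := hB b hb; omega))
  simpa using (pass_A.trans (by simpa using braid)).trans (by simpa using pass_B)

end HeckeEquiv

theorem List.Pairwise.exists_eq_append_succ_cons_cons {w : List ℕ} {y : ℕ}
    (hw : w.Pairwise fun p q => q < p) (hy1 : y + 1 ∈ w) (hy : y ∈ w) :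
    ∃ A B, w = A ++ (y + 1) :: y :: B ∧ (∀ a ∈ A, y + 1 < a) ∧ ∀ b ∈ B, b < y := by
  obtain ⟨A, C, rfl⟩ := List.append_of_mem hy1
  simp only [List.pairwise_append, List.pairwise_cons, List.mem_cons] at hw
  obtain ⟨-, ⟨hC_lt, hC⟩, hAC⟩ := hw
  have hA : ∀ a ∈ A, y + 1 < a := fun a ha => hAC a ha _ (Or.inl rfl)
  have hyC : y ∈ C := by
    simp only [List.mem_append, List.mem_cons] at hy
    rcases hy with hy | hy | hy
    · exact absurd (hA y hy) (by omega)
    · omega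
    · exact hy
  obtain _ | ⟨c, B⟩ := C
  · simp at hyC
  · have hc : c = y := by
      rcases List.mem_cons.mp hyC with h | h
      · exact h.symm
      · have := (List.pairwise_cons.mp hC).1 y h
        have := hC_lt c List.mem_cons_self
        omega
    subst hc
    exact ⟨A, B, rfl, hA, (List.pairwise_cons.mp hC).1⟩

/-- for a strictly decreasing word `w` containing both `x` and `x-1`,
`(x-1)·w ≡_H w·x`. -/
theorem statement11 (w : List ℕ) (x : ℕ)
    (hw : w.Chain' fun p q => q < p) (hpos : IsPosWord w)
    (hx : x ∈ w) (hx1 : x - 1 ∈ w) :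
    HeckeEquiv ((x - 1) :: w) (w ++ [x]) := by
  obtain ⟨y, rfl⟩ : ∃ y, x = y + 1 := Nat.exists_eq_add_one.mpr (hpos _ hx)
  have hdec : w.Pairwise fun p q => q < p := List.isChain_iff_pairwise.mp hw
  obtain ⟨A, B, rfl, hA, hB⟩ := hdec.exists_eq_append_succ_cons_cons hx (by simpa using hx1)
  simpa using HeckeEquiv.cons_equiv_append_succ y hA hB
end

section
/- For a strictly decreasing word w containing the letter x but not containing the letter x−1, the word w is Hecke-equivalent to w·x. -/
/-! Write `w = s ++ x :: t`. Since `w` strictly decreases and misses `x - 1`, every letter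
of `t` is at most `x - 2`, so a trailing `x` commutes leftwards through `t` and is then
absorbed by `xx ≡ x`. -/

namespace HeckeEquiv

instance : Trans HeckeEquiv HeckeEquiv HeckeEquiv := ⟨HeckeEquiv.trans⟩

theorem append_left (s : List ℕ) {a b : List ℕ} (h : HeckeEquiv a b) :
    HeckeEquiv (s ++ a) (s ++ b) :=
  append_congr (refl s) h

theorem cons_left (i : ℕ) {a b : List ℕ} (h : HeckeEquiv a b) :
    HeckeEquiv (i :: a) (i :: b) :=
  append_left [i] h

theorem append_singleton_comm {x : ℕ} :
    ∀ {v : List ℕ}, (∀ y ∈ v, y + 2 ≤ x ∨ x + 2 ≤ y) →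
      HeckeEquiv (v ++ [x]) (x :: v)
  | [], _ => refl _
  | y :: v, h =>
    calc HeckeEquiv (y :: (v ++ [x])) (y :: x :: v) :=
          cons_left y <| append_singleton_comm fun z hz => h z (List.mem_cons_of_mem _ hz)
      HeckeEquiv _ (x :: y :: v) :=
          append_congr (of (HeckeRel.comm y x (h y List.mem_cons_self))) (refl v)

theorem append_cons_absorb_right (s : List ℕ) {x : ℕ} {t : List ℕ}
    (ht : ∀ y ∈ t, y + 2 ≤ x ∨ x + 2 ≤ y) :
    HeckeEquiv (s ++ x :: t) (s ++ x :: t ++ [x]) := by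
  rw [List.append_assoc]
  refine append_left s (symm ?_)
  calc HeckeEquiv (x :: (t ++ [x])) (x :: x :: t) := cons_left x (append_singleton_comm ht)
    HeckeEquiv _ (x :: t) := append_congr (of (HeckeRel.idem x)) (refl t)

end HeckeEquiv

theorem statement12_general (w : List ℕ) (x : ℕ)
    (hw : w.Chain' fun p q => q < p)
    (hx : x ∈ w) (hx1 : x - 1 ∉ w) :
    HeckeEquiv w (w ++ [x]) := by
  obtain ⟨s, t, rfl⟩ := List.append_of_mem hx
  refine HeckeEquiv.append_cons_absorb_right s fun y hy => Or.inl ?_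
  have hdec := List.isChain_iff_pairwise.mp hw
  have hlt : y < x := (List.pairwise_cons.mp (List.pairwise_append.mp hdec).2.1).1 y hy
  have hne : y ≠ x - 1 := fun h => hx1 (by simp [← h, hy])
  omega

/-- for a strictly decreasing word `w` containing `x` but not `x-1`,
`w ≡_H w·x`. -/
theorem statement12 (w : List ℕ) (x : ℕ)
    (hw : w.Chain' fun p q => q < p) (hpos : IsPosWord w)
    (hx : x ∈ w) (hx1 : x - 1 ∉ w) :
    HeckeEquiv w (w ++ [x]) :=
  statement12_general w x hw hx hx1
end

section
/- Well-definedness of the forward insertion: given a decreasing tableau P and a positive integer m, the output tableau P' of the insertion Φ(P, m) is a decreasing tableau, and its shape equals shape(P) if the output flag α = 0, and shape(P) plus one new removable cell s if α = 1. -/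
/-- Positive, strictly decreasing entries: reading past the end gives `0`, so positivity is the
case `j ≥ R.length`. -/
def StrictAntiRow (R : List ℕ) : Prop :=
  ∀ i j, i < j → i < R.length → R.getD j 0 < R.getD i 0

def RowDominates (R S : List ℕ) : Prop :=
  S.length ≤ R.length ∧ ∀ j < S.length, S.getD j 0 < R.getD j 0

theorem strictAntiRow_iff (R : List ℕ) :
    StrictAntiRow R ↔ (∀ x ∈ R, 0 < x) ∧ R.IsChain (fun x y => y < x) := by
  have : Trans (fun x y : ℕ => y < x) (fun x y => y < x) (fun x y => y < x) :=
    ⟨fun h₁ h₂ => lt_trans h₂ h₁⟩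
  rw [List.isChain_iff_pairwise, List.pairwise_iff_getElem]
  constructor
  · intro h
    refine ⟨fun x hx => ?_, fun i j hi hj hij => ?_⟩
    · obtain ⟨i, hi, rfl⟩ := List.mem_iff_getElem.1 hx
      have := h i R.length hi hi
      rwa [List.getD_eq_getElem _ _ hi, List.getD_eq_default _ _ le_rfl] at this
    · have := h i j hij hi
      rwa [List.getD_eq_getElem _ _ hi, List.getD_eq_getElem _ _ hj] at this
  · rintro ⟨hpos, hdec⟩ i j hij hi
    rw [List.getD_eq_getElem _ _ hi]
    by_cases hj : j < R.length
    · rw [List.getD_eq_getElem _ _ hj]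
      exact hdec i j hi hj hij
    · rw [List.getD_eq_default _ _ (not_lt.1 hj)]
      exact hpos _ (List.getElem_mem hi)

theorem StrictAntiRow.nodup {R : List ℕ} (hR : StrictAntiRow R) : R.Nodup := by
  have : Std.Irrefl (fun x y : ℕ => y < x) := ⟨fun x => lt_irrefl x⟩
  have : Trans (fun x y : ℕ => y < x) (fun x y => y < x) (fun x y => y < x) :=
    ⟨fun h₁ h₂ => lt_trans h₂ h₁⟩
  exact List.Pairwise.nodup (List.isChain_iff_pairwise.1 ((strictAntiRow_iff R).1 hR).2)

theorem isDecreasingTableau_nil : IsDecreasingTableau [] :=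
  ⟨by simp, by simp, by simp, List.IsChain.nil⟩

theorem isDecreasingTableau_cons_iff {R : List ℕ} {T : List (List ℕ)} :
    IsDecreasingTableau (R :: T) ↔
      R ≠ [] ∧ StrictAntiRow R ∧ RowDominates R (T.headD []) ∧ IsDecreasingTableau T := by
  have hdom : (∀ S ∈ T.head?, RowDominates R S) ↔ RowDominates R (T.headD []) := by
    cases T <;> simp [RowDominates]
  simp only [IsDecreasingTableau, List.forall_mem_cons, strictAntiRow_iff, ← hdom]
  constructor
  · rintro ⟨⟨hR, hT⟩, ⟨hRpos, hTpos⟩, ⟨hRdec, hTdec⟩, hchain⟩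
    exact ⟨hR, ⟨hRpos, hRdec⟩, (List.isChain_cons.1 hchain).1, hT, hTpos, hTdec,
      (List.isChain_cons.1 hchain).2⟩
  · rintro ⟨hR, ⟨hRpos, hRdec⟩, hdom, hT, hTpos, hTdec, hchain⟩
    exact ⟨⟨hR, hT⟩, ⟨hRpos, hTpos⟩, ⟨hRdec, hTdec⟩, List.isChain_cons.2 ⟨hdom, hchain⟩⟩

theorem IsDecreasingTableau.strictAntiRow_headD {T : List (List ℕ)} (hT : IsDecreasingTableau T) :
    StrictAntiRow (T.headD []) := by
  cases T with
  | nil => intro i j _ hi; simp at hi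
  | cons S rest => exact (isDecreasingTableau_cons_iff.1 hT).2.1

def EntryBetween (v : ℕ) (R S : List ℕ) (p : ℕ) : Prop :=
  v < S.getD p 0 ∧ S.getD p 0 < R.getD p 0

/-- `T` is `S` with its first entry `≤ v` overwritten by `v`; that entry sits at position `p`,
which is `S.length` (so that `v` is appended) when there is none. -/
structure IsRowInsertion (v : ℕ) (S T : List ℕ) (p : ℕ) : Prop where
  lt_getD : ∀ k < p, v < S.getD k 0
  getD_le : S.getD p 0 ≤ v
  getD_eq : ∀ k, T.getD k 0 = if k = p then v else S.getD k 0
  length_eq : T.length = max S.length (p + 1)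

namespace IsRowInsertion

variable {v p : ℕ} {S T : List ℕ}

theorem ne_nil (h : IsRowInsertion v S T p) : T ≠ [] :=
  List.ne_nil_of_length_pos (by rw [h.length_eq]; omega)

theorem lt_length_of_ne (h : IsRowInsertion v S T p) {k : ℕ} (hk : k < T.length) (hkp : k ≠ p) :
    k < S.length := by
  by_contra hkS
  have := h.lt_getD k (by rw [h.length_eq] at hk; omega)
  rw [List.getD_eq_default _ _ (not_lt.1 hkS)] at this
  omega

theorem getD_le_getD (h : IsRowInsertion v S T p) (k : ℕ) : S.getD k 0 ≤ T.getD k 0 := by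
  rw [h.getD_eq]
  split_ifs with hk
  · exact hk ▸ h.getD_le
  · exact le_rfl

theorem strictAntiRow (h : IsRowInsertion v S T p) (hS : StrictAntiRow S) (hv : 0 < v) :
    StrictAntiRow T := by
  intro i j hij hi
  rw [h.getD_eq, h.getD_eq]
  split_ifs with hjp hip hip
  · omega
  · exact h.lt_getD i (by omega)
  · have hp := h.getD_le
    rcases lt_or_ge p S.length with hpS | hpS
    · exact (hS p j (by omega) hpS).trans_le (hip ▸ hp)
    · rwa [List.getD_eq_default _ _ (by omega)]
  · exact hS i j hij (h.lt_length_of_ne hi hip)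

theorem rowDominates_left {N : ℕ} {R R' : List ℕ} (h : IsRowInsertion N R R' p)
    (hRS : RowDominates R S) : RowDominates R' S := by
  refine ⟨hRS.1.trans (by rw [h.length_eq]; omega), fun k hk => ?_⟩
  exact (hRS.2 k hk).trans_le (h.getD_le_getD k)

/-- Without an entry between `v` and the overwritten one, `v` lands in the lower row no further
right than `N` in the upper row. -/
theorem rowDominates {N q : ℕ} {R R' S' : List ℕ} (hR : IsRowInsertion N R R' p)
    (hS : IsRowInsertion v S S' q) (hRS : RowDominates R S) (hvN : v < N)
    (hgap : ¬EntryBetween v R S p) : RowDominates R' S' := by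
  have hqp : q ≤ p := by
    by_contra! hpq
    have hv := hS.lt_getD p hpq
    have hpS : p < S.length := by
      by_contra hpS
      rw [List.getD_eq_default _ _ (not_lt.1 hpS)] at hv
      omega
    exact hgap ⟨hv, hRS.2 p hpS⟩
  refine ⟨by rw [hR.length_eq, hS.length_eq]; have := hRS.1; omega, fun k hk => ?_⟩
  rw [hR.getD_eq, hS.getD_eq]
  split_ifs with hkq hkp hkp
  · exact hvN
  · exact hvN.trans (hR.lt_getD k (by omega))
  · exact (hRS.2 k (hS.lt_length_of_ne hk hkq)).trans_le (hkp ▸ hR.getD_le)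
  · exact hRS.2 k (hS.lt_length_of_ne hk hkq)

end IsRowInsertion

def insRow (v : ℕ) (S : List ℕ) : List ℕ :=
  match (S.filter fun y => decide (y ≤ v)).max? with
  | none => S ++ [v]
  | some w => replaceVal S w v

theorem forall_lt_of_max?_filter_eq_none {S : List ℕ} {v : ℕ}
    (h : (S.filter fun y => decide (y ≤ v)).max? = none) : ∀ x ∈ S, v < x := by
  intro x hx
  have := List.filter_eq_nil_iff.1 (List.max?_eq_none_iff.1 h) x hx
  simpa using this

theorem max?_filter_eq_some_iff {S : List ℕ} {v w : ℕ} :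
    (S.filter fun y => decide (y ≤ v)).max? = some w ↔
      w ∈ S ∧ w ≤ v ∧ ∀ x ∈ S, x ≤ v → x ≤ w := by
  simp [List.max?_eq_some_iff, and_assoc]

theorem getD_replaceVal {R : List ℕ} (hR : R.Nodup) {w : ℕ} (hw : w ∈ R) (v k : ℕ) :
    (replaceVal R w v).getD k 0 = if k = R.idxOf w then v else R.getD k 0 := by
  have hw' : R.idxOf w < R.length := List.idxOf_lt_length_iff.2 hw
  rcases lt_or_ge k R.length with hk | hk
  · have hkw : R[k] = w ↔ k = R.idxOf w :=
      ⟨fun h => h ▸ (hR.idxOf_getElem k hk).symm, fun h => h ▸ List.getElem_idxOf hw'⟩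
    rw [List.getD_eq_getElem _ _ (by simpa [replaceVal] using hk), List.getD_eq_getElem _ _ hk]
    simp [replaceVal, hkw]
  · rw [List.getD_eq_default _ _ (by simpa [replaceVal] using hk),
      List.getD_eq_default _ _ hk, if_neg (by omega)]

theorem isRowInsertion_append {S : List ℕ} {v : ℕ} (h : ∀ x ∈ S, v < x) :
    IsRowInsertion v S (S ++ [v]) S.length where
  lt_getD k hk := by rw [List.getD_eq_getElem _ _ hk]; exact h _ (List.getElem_mem hk)
  getD_le := by rw [List.getD_eq_default _ _ le_rfl]; omega
  getD_eq k := by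
    rcases lt_trichotomy k S.length with hk | rfl | hk
    · rw [List.getD_append _ _ _ _ hk, if_neg hk.ne]
    · simp
    · rw [List.getD_eq_default _ _ (by simp; omega), List.getD_eq_default _ _ hk.le,
        if_neg hk.ne']
  length_eq := by simp

theorem isRowInsertion_replaceVal {S : List ℕ} {v w : ℕ} (hS : StrictAntiRow S)
    (hw : (S.filter fun y => decide (y ≤ v)).max? = some w) :
    IsRowInsertion v S (replaceVal S w v) (S.idxOf w) := by
  obtain ⟨hwS, hwv, hmax⟩ := max?_filter_eq_some_iff.1 hw
  have hp : S.idxOf w < S.length := List.idxOf_lt_length_iff.2 hwS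
  have hSp : S.getD (S.idxOf w) 0 = w := by
    rw [List.getD_eq_getElem _ _ hp, List.getElem_idxOf hp]
  refine ⟨fun k hk => ?_, hSp.trans_le hwv, getD_replaceVal hS.nodup hwS v, ?_⟩
  · have hwk := hSp ▸ hS k _ hk (hk.trans hp)
    have hkS : k < S.length := hk.trans hp
    by_contra! hkv
    have := hmax _ (List.getD_eq_getElem S 0 hkS ▸ List.getElem_mem hkS) hkv
    omega
  · simp only [replaceVal, List.length_map]
    omega

theorem exists_isRowInsertion_insRow {S : List ℕ} (v : ℕ) (hS : StrictAntiRow S) :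
    ∃ p, IsRowInsertion v S (insRow v S) p := by
  unfold insRow
  split
  · next h => exact ⟨_, isRowInsertion_append (forall_lt_of_max?_filter_eq_none h)⟩
  · next w h => exact ⟨_, isRowInsertion_replaceVal hS h⟩

theorem largestEjectableBetween_eq_some_iff {T : List (List ℕ)} {lo hi y : ℕ} :
    largestEjectableBetween T lo hi = some y ↔
      (y ∈ T.headD [] ∧ ejectableB T y ∧ lo < y ∧ y < hi) ∧
        ∀ z ∈ T.headD [], ejectableB T z → lo < z → z < hi → z ≤ y := by
  simp [largestEjectableBetween, List.max?_eq_some_iff, and_assoc]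

theorem largestEjectableBetween_eq_none_iff {T : List (List ℕ)} {lo hi : ℕ} :
    largestEjectableBetween T lo hi = none ↔
      ∀ z ∈ T.headD [], ejectableB T z → lo < z → z < hi → False := by
  simp [largestEjectableBetween, List.filter_eq_nil_iff]

/-- If `S` lies below `R` and `S[p] > R[p+1]`, then `S[p] - 1` cannot occur in `S`: it would have
to sit at position `p+1`, below `R[p+1] < S[p]`. -/
theorem ejectableB_cons_getD {R S : List ℕ} (rest : List (List ℕ)) (hS : StrictAntiRow S)
    (hRS : RowDominates R S) {p : ℕ} (hp : R.getD (p + 1) 0 < S.getD p 0) :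
    ejectableB (S :: rest) (S.getD p 0) = true := by
  have hpS : p < S.length := by
    by_contra h
    rw [List.getD_eq_default _ _ (not_lt.1 h)] at hp
    omega
  have hmem : S.getD p 0 ∈ S := List.getD_eq_getElem S 0 hpS ▸ List.getElem_mem hpS
  have hpred : S.getD p 0 - 1 ∉ S := by
    intro h
    obtain ⟨q, hq, hqv⟩ := List.mem_iff_getElem.1 h
    rw [← List.getD_eq_getElem S 0 hq] at hqv
    have hpq : p < q := by
      by_contra! hqp
      rcases hqp.lt_or_eq with hqp | rfl
      · have := hS q p hqp hq
        omega
      · omega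
    have hp1 : p + 1 < S.length := by omega
    have hq1 : S.getD q 0 ≤ S.getD (p + 1) 0 := by
      rcases (Nat.succ_le_of_lt hpq).lt_or_eq with h | h
      · exact (hS _ q h hp1).le
      · rw [← h]
    have := hRS.2 (p + 1) hp1
    omega
  generalize S.getD p 0 = z at hmem hpred
  simp [ejectableB, hmem, hpred]

theorem not_entryBetween_of_forall_ejectableB_le {R : List ℕ} {T : List (List ℕ)}
    (hS : StrictAntiRow (T.headD [])) (hRS : RowDominates R (T.headD [])) {p v : ℕ}
    (hv : R.getD (p + 1) 0 ≤ v)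
    (hle : ∀ z ∈ T.headD [], ejectableB T z → R.getD (p + 1) 0 < z → z < R.getD p 0 → z ≤ v) :
    ¬EntryBetween v R (T.headD []) p := by
  rintro ⟨hvz, hzR⟩
  cases T with
  | nil => simp at hvz
  | cons S rest =>
    simp only [List.headD_cons] at hS hRS hle hvz hzR
    have hpS : p < S.length := by
      by_contra h
      rw [List.getD_eq_default _ _ (not_lt.1 h)] at hvz
      omega
    have hz := hle _ (List.getD_eq_getElem S 0 hpS ▸ List.getElem_mem hpS)
      (ejectableB_cons_getD rest hS hRS (by omega)) (by omega) hzR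
    omega

/-- The outcomes of the first row of `phiRows`: (T1), (T2), and passing a value `v` to the rows
below, which covers (D), (DR), (IR1) and (IR2). -/
theorem phiRows_cons_cases {N : ℕ} {R : List ℕ} {rest : List (List ℕ)} (hN : 0 < N)
    (hP : IsDecreasingTableau (R :: rest)) :
    ∃ p, IsRowInsertion N R (insRow N R) p ∧
      (phiRows N (R :: rest) = (insRow N R :: rest, 1, R.length + 1, true) ∧ p = R.length ∨
       (∃ c, phiRows N (R :: rest) = (insRow N R :: rest, 1, c, false)) ∧ p < R.length ∨
       (∃ v, 0 < v ∧ v < N ∧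
          ¬EntryBetween v R (rest.headD []) p ∧
          phiRows N (R :: rest) =
            (insRow N R :: (phiRows v rest).1, (phiRows v rest).2.1 + 1, (phiRows v rest).2.2)) ∧
         p < R.length) := by
  obtain ⟨-, hR, hRS, hrest⟩ := isDecreasingTableau_cons_iff.1 hP
  have hS := hrest.strictAntiRow_headD
  have hpos : ∀ x ∈ R, 0 < x := ((strictAntiRow_iff R).1 hR).1
  rcases hm : (R.filter fun y => decide (y ≤ N)).max? with _ | n1
  · have hins : insRow N R = R ++ [N] := by rw [insRow, hm]
    refine ⟨_, hins ▸ isRowInsertion_append (forall_lt_of_max?_filter_eq_none hm), Or.inl ?_⟩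
    simp [phiRows, hm, hins]
  obtain ⟨hn1R, hn1N, -⟩ := max?_filter_eq_some_iff.1 hm
  have hins : insRow N R = replaceVal R n1 N := by rw [insRow, hm]
  have hp : R.idxOf n1 < R.length := List.idxOf_lt_length_iff.2 hn1R
  have hRp : R.getD (R.idxOf n1) 0 = n1 := by
    rw [List.getD_eq_getElem _ _ hp, List.getElem_idxOf hp]
  refine ⟨_, hins ▸ isRowInsertion_replaceVal hR hm, ?_⟩
  simp only [phiRows, hm, hins]
  split
  · next hD =>
    simp only [Bool.and_eq_true, decide_eq_true_eq, List.contains_iff_mem] at hD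
    exact Or.inr (Or.inr ⟨⟨N - 1, by have := hpos _ hD.2; omega, by omega,
      by rw [EntryBetween]; omega, rfl⟩, hp⟩)
  split
  · next hDR =>
    simp only [Bool.and_eq_true, decide_eq_true_eq, Bool.not_eq_true'] at hDR
    exact Or.inr (Or.inr ⟨⟨n1, hpos _ hn1R, hDR.1, by rw [EntryBetween]; omega, rfl⟩, hp⟩)
  split
  · next y hy =>
    obtain ⟨⟨hyS, -, hy2, hy1⟩, hmax⟩ := largestEjectableBetween_eq_some_iff.1 hy
    refine Or.inr (Or.inr ⟨⟨y, ((strictAntiRow_iff _).1 hS).1 y hyS, by omega,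
      not_entryBetween_of_forall_ejectableB_le hS hRS hy2.le fun z hz hze h2 h1 => ?_, rfl⟩, hp⟩)
    exact hmax z hz hze h2 (hRp ▸ h1)
  · next hy =>
    have hnone := largestEjectableBetween_eq_none_iff.1 hy
    split
    · exact Or.inr (Or.inl ⟨⟨_, rfl⟩, hp⟩)
    · next hn2 =>
      have hn2n1 : R.getD (R.idxOf n1 + 1) 0 < n1 := by
        have := hR (R.idxOf n1) (R.idxOf n1 + 1) (by omega) hp
        rwa [hRp] at this
      refine Or.inr (Or.inr ⟨⟨_, Nat.pos_of_ne_zero hn2, by omega,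
        not_entryBetween_of_forall_ejectableB_le hS hRS le_rfl fun z hz hze h2 h1 => ?_, rfl⟩, hp⟩)
      exact (hnone z hz hze h2 (hRp ▸ h1)).elim

theorem phiRows_headD (N : ℕ) (P : List (List ℕ)) :
    (phiRows N P).1.headD [] = insRow N (P.headD []) := by
  cases P with
  | nil => rfl
  | cons R rest =>
    simp only [phiRows, insRow, List.headD_cons]
    split
    · rfl
    · split_ifs <;> (try split) <;> rfl

theorem isDecreasingTableau_phiRows (P : List (List ℕ)) :
    ∀ N, 0 < N → IsDecreasingTableau P → IsDecreasingTableau (phiRows N P).1 := by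
  induction P with
  | nil =>
    intro N hN _
    refine isDecreasingTableau_cons_iff.2 ⟨by simp, fun i j hij hi => ?_, by simp [RowDominates],
      isDecreasingTableau_nil⟩
    obtain rfl : i = 0 := by simpa using hi
    rw [List.getD_eq_default _ _ (by simp; omega)]
    exact hN
  | cons R rest ih =>
    intro N hN hP
    obtain ⟨-, hR, hRS, hrest⟩ := isDecreasingTableau_cons_iff.1 hP
    obtain ⟨p, hI, hstep⟩ := phiRows_cons_cases hN hP
    have hrow := hI.strictAntiRow hR hN
    have hstop : IsDecreasingTableau (insRow N R :: rest) :=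
      isDecreasingTableau_cons_iff.2 ⟨hI.ne_nil, hrow, hI.rowDominates_left hRS, hrest⟩
    rcases hstep with ⟨h, -⟩ | ⟨⟨c, h⟩, -⟩ | ⟨⟨v, hv, hvN, hgap, h⟩, -⟩ <;> rw [h]
    · exact hstop
    · exact hstop
    · obtain ⟨q, hq⟩ := exists_isRowInsertion_insRow v hrest.strictAntiRow_headD
      refine isDecreasingTableau_cons_iff.2 ⟨hI.ne_nil, hrow, ?_, ih v hv hrest⟩
      rw [phiRows_headD]
      exact hI.rowDominates hq hRS hvN hgap

def ShapeGrowth (P P' : List (List ℕ)) (r c : ℕ) (α : Bool) : Prop :=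
  (α = false → shape P' = shape P) ∧
    (α = true → IsRemovable P' r c ∧ shape P' = shapePlus (shape P) r)

theorem shapeGrowth_new_cell {R R' : List ℕ} {P : List (List ℕ)}
    (hR' : R'.length = R.length + 1) (hP : (P.headD []).length ≤ R.length) :
    ShapeGrowth (R :: P) (R' :: P) 1 (R.length + 1) true := by
  refine ⟨by simp, fun _ => ⟨⟨le_rfl, by simp, by omega, ?_, ?_⟩, ?_⟩⟩
  · simpa [RowOf] using hR'
  · have hrow : RowOf (R' :: P) (1 + 1) = P.headD [] := by cases P <;> rfl
    rw [hrow]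
    omega
  · simp [shape, shapePlus, hR']

theorem shapeGrowth_of_length_eq {R R' : List ℕ} {P : List (List ℕ)} {r c : ℕ}
    (hR' : R'.length = R.length) : ShapeGrowth (R :: P) (R' :: P) r c false :=
  ⟨fun _ => by simp [shape, hR'], by simp⟩

theorem shapePlus_cons (x : ℕ) (sh : List ℕ) {r : ℕ} (hr : 1 ≤ r) :
    shapePlus (x :: sh) (r + 1) = x :: shapePlus sh r := by
  obtain ⟨r, rfl⟩ : ∃ r', r = r' + 1 := ⟨r - 1, by omega⟩
  by_cases h : r < sh.length
  · simp [shapePlus, h, Nat.succ_le_of_lt h]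
  · simp [shapePlus, not_le.2 (Nat.lt_succ_of_le (not_lt.1 h))]

theorem ShapeGrowth.cons {P P' : List (List ℕ)} {r c : ℕ} {α : Bool} {R R' : List ℕ}
    (h : ShapeGrowth P P' r c α) (hR' : R'.length = R.length) :
    ShapeGrowth (R :: P) (R' :: P') (r + 1) c α := by
  refine ⟨fun hα => ?_, fun hα => ?_⟩
  · have hsh := h.1 hα
    simp only [shape, List.map_cons, hR'] at hsh ⊢
    rw [hsh]
  obtain ⟨⟨hr, hrP, hc, hlen, hlen'⟩, hsh⟩ := h.2 hα
  obtain ⟨r, rfl⟩ : ∃ r', r = r' + 1 := ⟨r - 1, by omega⟩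
  refine ⟨⟨by omega, by simpa using hrP, hc, by simpa [RowOf] using hlen,
    by simpa [RowOf] using hlen'⟩, ?_⟩
  simp only [shape, List.map_cons, hR'] at hsh ⊢
  rw [hsh, shapePlus_cons _ _ hr]

theorem shapeGrowth_phiRows (P : List (List ℕ)) :
    ∀ N, 0 < N → IsDecreasingTableau P →
      ShapeGrowth P (phiRows N P).1 (phiRows N P).2.1 (phiRows N P).2.2.1 (phiRows N P).2.2.2 := by
  induction P with
  | nil =>
    intro N _ _
    exact ⟨by simp [phiRows], fun _ => ⟨⟨le_rfl, by simp [phiRows], le_rfl, by simp [phiRows, RowOf],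
      by simp [phiRows, RowOf]⟩, by simp [phiRows, shape, shapePlus]⟩⟩
  | cons R rest ih =>
    intro N hN hP
    obtain ⟨-, -, hRS, hrest⟩ := isDecreasingTableau_cons_iff.1 hP
    obtain ⟨p, hI, hstep⟩ := phiRows_cons_cases hN hP
    rcases hstep with ⟨h, hp⟩ | ⟨⟨c, h⟩, hp⟩ | ⟨⟨v, hv, -, -, h⟩, hp⟩ <;> rw [h]
    · exact shapeGrowth_new_cell (by rw [hI.length_eq]; omega) hRS.1
    · exact shapeGrowth_of_length_eq (by rw [hI.length_eq]; omega)
    · exact (ih v hv hrest).cons (by rw [hI.length_eq]; omega)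

/-- Φ is well-defined: the output tableau is decreasing, of the same
shape if `α = 0`, and of the shape with one new removable cell added if `α = 1`. -/
theorem statement13 (P : List (List ℕ)) (m : ℕ)
    (hP : IsDecreasingTableau P) (hm : 0 < m) :
    IsDecreasingTableau (phi P m).1 ∧
    ((phi P m).2.2.2 = false → shape (phi P m).1 = shape P) ∧
    ((phi P m).2.2.2 = true →
      IsRemovable (phi P m).1 (phi P m).2.1 (phi P m).2.2.1 ∧
      shape (phi P m).1 = shapePlus (shape P) (phi P m).2.1) :=
  ⟨isDecreasingTableau_phiRows P m hm hP, shapeGrowth_phiRows P m hm hP⟩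
end

section
/- In an Indirect Replacement case 2 iteration of the forward insertion Φ, where N is inserted into P_{≥i} with n₁ the largest entry of row i at most N and n₂ the entry immediately to the right of n₁ (n₂ > 0): if there is an entry t₁ directly below n₁ in P, then t₁ ≤ n₂. -/
/-! If the entry `t₁` below `n₁` exceeded `n₂`, then `t₁ - 1` could not lie in the second
row: entries to the left of `t₁` are larger than `t₁`, and entries to its right are below the
corresponding entries of the first row, hence below `n₂`. So `t₁` would be ejectable from
`P_{>i}` and lie strictly between `n₂` and `n₁`, contradicting case 2. -/

theorem List.Pairwise.notMem_of_getElem_succ_lt_of_lt_getElem {α : Type*} [LinearOrder α]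
    {S : List α} (hS : S.Pairwise (· > ·)) {j : ℕ} (hj : j < S.length) {x : α}
    (hx : x < S[j]) (hnext : ∀ h : j + 1 < S.length, S[j + 1] < x) : x ∉ S := by
  intro hmem
  obtain ⟨k, hk, rfl⟩ := List.mem_iff_getElem.1 hmem
  have hdec := List.pairwise_iff_getElem.1 hS
  rcases lt_trichotomy k j with hkj | rfl | hjk
  · exact lt_asymm hx (hdec k j hk hj hkj)
  · exact lt_irrefl _ hx
  · have hj1 : j + 1 < S.length := by omega
    rcases (Nat.succ_le_of_lt hjk).eq_or_lt with hk1 | hk1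
    · subst hk1
      exact lt_irrefl _ (hnext hj1)
    · exact lt_asymm (hnext hj1) (hdec (j + 1) k hj1 hk hk1)

namespace IsDecreasingTableau

variable {R S : List ℕ} {tail : List (List ℕ)}

theorem getD_lt_getD (hT : IsDecreasingTableau (R :: S :: tail)) {j : ℕ} (hj : j < S.length) :
    S.getD j 0 < R.getD j 0 :=
  (List.isChain_cons_cons.1 hT.2.2.2).1.2 j hj

theorem ejectable_getD_of_getD_succ_lt (hT : IsDecreasingTableau (R :: S :: tail)) {j : ℕ}
    (hj : j < S.length) (hlt : R.getD (j + 1) 0 < S.getD j 0) :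
    Ejectable (S :: tail) (S.getD j 0) := by
  rw [List.getD_eq_getElem _ _ hj] at hlt ⊢
  have hS : S.Pairwise (· > ·) := List.isChain_iff_pairwise.1 (hT.2.2.1 S (by simp))
  refine ⟨List.getElem_mem hj, Or.inl (hS.notMem_of_getElem_succ_lt_of_lt_getElem hj (by omega)
    fun hj1 => ?_)⟩
  have := hT.getD_lt_getD hj1
  rw [List.getD_eq_getElem _ _ hj1] at this
  omega

end IsDecreasingTableau

theorem List.getD_idxOf_of_mem {α : Type*} [BEq α] [LawfulBEq α] {l : List α} {a : α} (d : α)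
    (ha : a ∈ l) : l.getD (l.idxOf a) d = a := by
  rw [List.getD_eq_getElem _ _ (List.idxOf_lt_length_iff.2 ha), List.getElem_idxOf]

theorem statement14_general (R : List ℕ) (rest : List (List ℕ)) (N n1 j n2 : ℕ)
    (hT : IsDecreasingTableau (R :: rest))
    (hn1 : (R.filter fun y => decide (y ≤ N)).max? = some n1)
    (hj : j = R.idxOf n1) (hn2 : n2 = R.getD (j + 1) 0)
    (hy : ∀ y, Ejectable rest y → ¬ (n2 < y ∧ y < n1))
    (hbelow : j < (rest.headD []).length) :
    (rest.headD []).getD j 0 ≤ n2 := by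
  obtain ⟨S, tail, rfl⟩ : ∃ S tail, rest = S :: tail := by
    cases rest with
    | nil => simp at hbelow
    | cons S tail => exact ⟨S, tail, rfl⟩
  simp only [List.headD] at hbelow ⊢
  have hn1R : n1 ∈ R := (List.mem_filter.1 (List.max?_mem hn1)).1
  have hRj : R.getD j 0 = n1 := hj ▸ List.getD_idxOf_of_mem 0 hn1R
  by_contra! hcon
  exact hy _ (hT.ejectable_getD_of_getD_succ_lt hbelow (hn2 ▸ hcon))
    ⟨hcon, hRj ▸ hT.getD_lt_getD hbelow⟩

/-- in an Indirect Replacement case 2 iteration of Φ (inserting `N`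
into the tableau `R :: rest`), any entry directly below `n₁` is at most `n₂`. -/
theorem statement14 (R : List ℕ) (rest : List (List ℕ)) (N n1 j n2 : ℕ)
    (hT : IsDecreasingTableau (R :: rest))
    (hn1 : (R.filter fun y => decide (y ≤ N)).max? = some n1)
    (hj : j = R.idxOf n1) (hn2 : n2 = R.getD (j + 1) 0)
    (hD : ¬ (n1 = N ∧ N - 1 ∈ R))
    (hDR : ¬ (n1 < N ∧ ¬ Ejectable rest n1))
    (hy : ∀ y, Ejectable rest y → ¬ (n2 < y ∧ y < n1))
    (hn2pos : 0 < n2)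
    (hbelow : j < (rest.headD []).length) :
    (rest.headD []).getD j 0 ≤ n2 :=
  statement14_general R rest N n1 j n2 hT hn1 hj hn2 hy hbelow
end

section
/- Pieri property of forward insertion: let Φ(P, m) = (P', (r₁,c₁), α) and Φ(P', m') = (P'', (r₂,c₂), α'). If m' < m, then c₁ < c₂. -/
namespace List

theorem SortedGT.succ_lt_length_of_lt_getElem {S : List ℕ} (hS : S.SortedGT) {y j : ℕ}
    (hy : y ∈ S) (hj : j < S.length) (hlt : y < S[j]) :
    ∃ h : j + 1 < S.length, y ≤ S[j + 1] := by
  obtain ⟨k, hk, rfl⟩ := List.getElem_of_mem hy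
  have hjk : j < k := hS.getElem_lt_getElem_iff.1 hlt
  exact ⟨by omega, hS.getElem_le_getElem_iff.2 hjk⟩

theorem max?_filter_le_eq_some_iff {R : List ℕ} {N n : ℕ} :
    (R.filter fun y => decide (y ≤ N)).max? = some n ↔
      n ∈ R ∧ n ≤ N ∧ ∀ x ∈ R, x ≤ N → x ≤ n := by
  simp [List.max?_eq_some_iff, List.mem_filter, and_assoc]

theorem lt_of_max?_filter_le_eq_none {R : List ℕ} {N : ℕ}
    (h : (R.filter fun y => decide (y ≤ N)).max? = none) {x : ℕ} (hx : x ∈ R) : N < x := by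
  by_contra hc
  simp_all [List.max?_eq_none_iff, List.filter_eq_nil_iff]

theorem max?_filter_le_append_singleton_eq_none {R : List ℕ} {N N' : ℕ}
    (h : (R.filter fun y => decide (y ≤ N)).max? = none) (hN : N' < N) :
    ((R ++ [N]).filter fun y => decide (y ≤ N')).max? = none := by
  simp only [List.max?_eq_none_iff, List.filter_eq_nil_iff, List.mem_append,
    List.mem_singleton, decide_eq_true_eq, not_le]
  rintro x (hx | rfl)
  · exact hN.trans (lt_of_max?_filter_le_eq_none h hx)
  · exact hN

end List

theorem length_replaceVal (R : List ℕ) (a b : ℕ) : (replaceVal R a b).length = R.length := by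
  simp [replaceVal]

theorem getElem_replaceVal {R : List ℕ} (hR : R.Nodup) (a b : ℕ) {k : ℕ} (hk : k < R.length) :
    (replaceVal R a b)[k]'(by simpa [length_replaceVal] using hk) =
      if k = R.idxOf a then b else R[k] := by
  simp only [replaceVal, List.getElem_map]
  congr 1
  exact propext ⟨fun h => by rw [← h, hR.idxOf_getElem], by rintro rfl; exact List.getElem_idxOf hk⟩

theorem mem_replaceVal_of_mem {R : List ℕ} {a : ℕ} (b : ℕ) (ha : a ∈ R) : b ∈ replaceVal R a b :=
  List.mem_map.2 ⟨a, ha, if_pos rfl⟩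

theorem eq_or_mem_of_mem_replaceVal {R : List ℕ} {a b x : ℕ} (hx : x ∈ replaceVal R a b) :
    x = b ∨ (x ∈ R ∧ x ≠ a) := by
  obtain ⟨y, hy, rfl⟩ := List.mem_map.1 hx
  by_cases hya : y = a <;> simp [hya, hy]

theorem pos_of_mem_replaceVal {R : List ℕ} {a b x : ℕ} (hpos : ∀ x ∈ R, 0 < x) (hb : 0 < b)
    (hx : x ∈ replaceVal R a b) : 0 < x :=
  (eq_or_mem_of_mem_replaceVal hx).elim (fun h => h ▸ hb) (fun h => hpos x h.1)

theorem sortedGT_replaceVal {R : List ℕ} (hR : R.SortedGT) {N n : ℕ}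
    (hmax : (R.filter fun y => decide (y ≤ N)).max? = some n) :
    (replaceVal R n N).SortedGT := by
  obtain ⟨-, hnN, hn⟩ := List.max?_filter_le_eq_some_iff.1 hmax
  refine List.Pairwise.sortedGT (List.pairwise_map.2 (hR.pairwise.imp_of_mem ?_))
  intro a b ha hb hab
  by_cases han : a = n <;> by_cases hbn : b = n <;> simp only [han, hbn, if_true, if_false]
  · omega
  · omega
  · have := hn a ha; omega
  · exact hab

theorem ejectableB_cons {S : List ℕ} {rest : List (List ℕ)} {x : ℕ} (hx : x ∈ S)
    (hx1 : x - 1 ∉ S) : ejectableB (S :: rest) x = true := by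
  simp [ejectableB, hx, hx1]

theorem pred_mem_of_ejectableB_eq_false {S : List ℕ} {rest : List (List ℕ)} {x : ℕ}
    (hx : x ∈ S) (h : ejectableB (S :: rest) x = false) : x - 1 ∈ S := by
  by_contra hx1
  rw [ejectableB_cons hx hx1] at h
  exact Bool.noConfusion h

theorem largestEjectableBetween_eq_some {T : List (List ℕ)} {lo hi y : ℕ}
    (h : largestEjectableBetween T lo hi = some y) :
    y ∈ T.headD [] ∧ ejectableB T y = true ∧ lo < y ∧ y < hi := by
  have := (List.max?_eq_some_iff.1 h).1
  simp only [List.mem_filter, Bool.and_eq_true, decide_eq_true_eq] at this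
  exact ⟨this.1, this.2.1.1, this.2.1.2, this.2.2⟩

theorem ejectableB_eq_false_of_largestEjectableBetween_eq_none {T : List (List ℕ)} {lo hi x : ℕ}
    (h : largestEjectableBetween T lo hi = none) (hx : x ∈ T.headD []) (hlo : lo < x)
    (hhi : x < hi) : ejectableB T x = false := by
  rw [largestEjectableBetween, List.max?_eq_none_iff, List.filter_eq_nil_iff] at h
  simpa [hlo, hhi] using h x hx

namespace IsDecreasingTableau

variable {R S : List ℕ} {rest : List (List ℕ)}

theorem of_cons (h : IsDecreasingTableau (R :: rest)) : IsDecreasingTableau rest :=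
  ⟨fun T hT => h.1 T (List.mem_cons_of_mem _ hT), fun T hT => h.2.1 T (List.mem_cons_of_mem _ hT),
    fun T hT => h.2.2.1 T (List.mem_cons_of_mem _ hT), h.2.2.2.tail⟩

theorem pos (h : IsDecreasingTableau (R :: rest)) {x : ℕ} (hx : x ∈ R) : 0 < x :=
  h.2.1 R List.mem_cons_self x hx

theorem sortedGT (h : IsDecreasingTableau (R :: rest)) : R.SortedGT :=
  (h.2.2.1 R List.mem_cons_self).sortedGT

theorem getD_lt_getD_s16 (h : IsDecreasingTableau (R :: S :: rest)) {k : ℕ} (hk : k < S.length) :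
    S.getD k 0 < R.getD k 0 :=
  (List.isChain_cons_cons.1 h.2.2.2).1.2 k hk

end IsDecreasingTableau

/-- The paper's `n₂`: the entry after `n` in `R`, and `0` if `n` is the last entry. -/
def nextEntry (R : List ℕ) (n : ℕ) : ℕ := R.getD (R.idxOf n + 1) 0

theorem nextEntry_lt {R : List ℕ} (hR : R.SortedGT) (hpos : ∀ x ∈ R, 0 < x) {n : ℕ} (hn : n ∈ R) :
    nextEntry R n < n := by
  have hj : R.idxOf n < R.length := List.idxOf_lt_length_iff.2 hn
  unfold nextEntry
  by_cases hj' : R.idxOf n + 1 < R.length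
  · rw [List.getD_eq_getElem _ _ hj']
    conv_rhs => rw [← List.getElem_idxOf hj]
    exact hR.getElem_lt_getElem_iff.2 (Nat.lt_succ_self _)
  · rw [List.getD_eq_default _ _ (by omega)]
    exact hpos n hn

/-- The value that `phiRows N` inserts into the rows below `R` after `N` has replaced the entry
`n1` of `R`; `none` when the insertion terminates in `R` (case T2). -/
def bumpValue (R : List ℕ) (rest : List (List ℕ)) (N n1 : ℕ) : Option ℕ :=
  if n1 = N ∧ N - 1 ∈ R then some (N - 1)
  else if n1 < N ∧ ejectableB rest n1 = false then some n1
  else match largestEjectableBetween rest (nextEntry R n1) n1 with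
    | some y => some y
    | none => if nextEntry R n1 = 0 then none else some (nextEntry R n1)

section bumpValue

variable {R : List ℕ} {rest : List (List ℕ)} {N n1 v : ℕ}

theorem bumpValue_eq_some_cases (hb : bumpValue R rest N n1 = some v) :
    (n1 = N ∧ N - 1 ∈ R ∧ v = N - 1) ∨
    (n1 < N ∧ ejectableB rest n1 = false ∧ v = n1) ∨
    largestEjectableBetween rest (nextEntry R n1) n1 = some v ∨
    (largestEjectableBetween rest (nextEntry R n1) n1 = none ∧ nextEntry R n1 ≠ 0 ∧
      v = nextEntry R n1) := by
  unfold bumpValue at hb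
  split_ifs at hb with h1 h2
  · exact Or.inl ⟨h1.1, h1.2, (Option.some_inj.1 hb).symm⟩
  · exact Or.inr (Or.inl ⟨h2.1, h2.2, (Option.some_inj.1 hb).symm⟩)
  all_goals split at hb <;> simp_all

theorem bumpValue_of_eq_of_pred_mem (h : n1 = N) (hN : N - 1 ∈ R) :
    bumpValue R rest N n1 = some (N - 1) := by
  simp [bumpValue, h, hN]

theorem nextEntry_eq_zero_of_bumpValue_eq_none (hb : bumpValue R rest N n1 = none) :
    nextEntry R n1 = 0 := by
  unfold bumpValue at hb
  split_ifs at hb <;> split at hb <;> simp_all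

theorem bumpValue_pos (hpos : ∀ x ∈ R, 0 < x)
    (hmax : (R.filter fun y => decide (y ≤ N)).max? = some n1)
    (hb : bumpValue R rest N n1 = some v) : 0 < v := by
  have hn1 := hpos n1 (List.max?_filter_le_eq_some_iff.1 hmax).1
  rcases bumpValue_eq_some_cases hb with ⟨-, h, rfl⟩ | ⟨-, -, rfl⟩ | h | ⟨-, h, rfl⟩
  · exact hpos _ h
  · exact hn1
  · have := (largestEjectableBetween_eq_some h).2.2.1; omega
  · omega

theorem nextEntry_le_bumpValue (hn : nextEntry R n1 < n1)
    (hb : bumpValue R rest N n1 = some v) : nextEntry R n1 ≤ v := by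
  rcases bumpValue_eq_some_cases hb with ⟨rfl, -, rfl⟩ | ⟨-, -, rfl⟩ | h | ⟨-, -, rfl⟩
  · omega
  · omega
  · exact (largestEjectableBetween_eq_some h).2.2.1.le
  · rfl

theorem bumpValue_le (hn : nextEntry R n1 < n1) (hb : bumpValue R rest N n1 = some v) :
    v ≤ n1 := by
  rcases bumpValue_eq_some_cases hb with ⟨rfl, -, rfl⟩ | ⟨-, -, rfl⟩ | h | ⟨-, -, rfl⟩
  · omega
  · rfl
  · exact (largestEjectableBetween_eq_some h).2.2.2.le
  · exact hn.le

theorem ejectableB_eq_false_of_bumpValue_eq_some_self (hn : nextEntry R n1 < n1)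
    (hb : bumpValue R rest N n1 = some n1) : ejectableB rest n1 = false := by
  rcases bumpValue_eq_some_cases hb with ⟨rfl, -, h⟩ | ⟨-, h, -⟩ | h | ⟨-, -, h⟩
  · omega
  · exact h
  · exact absurd (largestEjectableBetween_eq_some h).2.2.2 (lt_irrefl _)
  · omega

theorem phiRows_cons_of_max?_eq_none (h : (R.filter fun y => decide (y ≤ N)).max? = none) :
    phiRows N (R :: rest) = ((R ++ [N]) :: rest, 1, R.length + 1, true) := by
  simp only [phiRows, h]

theorem phiRows_cons_of_bumpValue_eq_none
    (hmax : (R.filter fun y => decide (y ≤ N)).max? = some n1)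
    (hb : bumpValue R rest N n1 = none) :
    phiRows N (R :: rest) = (replaceVal R n1 N :: rest, 1, R.idxOf n1 + 1, false) := by
  unfold bumpValue nextEntry at hb
  simp only [phiRows, hmax]
  split_ifs at hb ⊢ <;> simp_all <;> split at hb <;> simp_all

theorem phiRows_cons_of_bumpValue_eq_some
    (hmax : (R.filter fun y => decide (y ≤ N)).max? = some n1)
    (hb : bumpValue R rest N n1 = some v) :
    phiRows N (R :: rest) = (replaceVal R n1 N :: (phiRows v rest).1,
      (phiRows v rest).2.1 + 1, (phiRows v rest).2.2.1, (phiRows v rest).2.2.2) := by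
  unfold bumpValue nextEntry at hb
  simp only [phiRows, hmax]
  split_ifs at hb ⊢ <;> simp_all <;> split at hb <;> simp_all

theorem phiRows_cons_fst_of_max?_eq_some {R : List ℕ} {rest : List (List ℕ)} {N n1 : ℕ}
    (hmax : (R.filter fun y => decide (y ≤ N)).max? = some n1) :
    ∃ rest', (phiRows N (R :: rest)).1 = replaceVal R n1 N :: rest' := by
  rcases hb : bumpValue R rest N n1 with _ | v
  · exact ⟨rest, by rw [phiRows_cons_of_bumpValue_eq_none hmax hb]⟩
  · exact ⟨_, by rw [phiRows_cons_of_bumpValue_eq_some hmax hb]⟩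

/-- This is what makes the insertion path move weakly to the left. -/
theorem getD_idxOf_le_bumpValue (hT : IsDecreasingTableau (R :: rest))
    (hmax : (R.filter fun y => decide (y ≤ N)).max? = some n1)
    (hb : bumpValue R rest N n1 = some v) : (rest.headD []).getD (R.idxOf n1) 0 ≤ v := by
  obtain ⟨hn1R, -, -⟩ := List.max?_filter_le_eq_some_iff.1 hmax
  rcases rest with _ | ⟨S, rest⟩
  · simp
  set j := R.idxOf n1
  have hjR : j < R.length := List.idxOf_lt_length_iff.2 hn1R
  have hS := hT.of_cons.sortedGT
  simp only [List.headD_cons]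
  by_contra! hlt
  have hjS : j < S.length := by
    by_contra h
    rw [List.getD_eq_default _ _ (by omega)] at hlt
    omega
  have hcol : ∀ k (hk : k < S.length), S[k] < R.getD k 0 := fun k hk => by
    have := hT.getD_lt_getD_s16 hk
    rwa [List.getD_eq_getElem _ _ hk] at this
  have hSj : S[j] < n1 := by
    have := hcol j hjS
    rwa [List.getD_eq_getElem _ _ hjR, List.getElem_idxOf] at this
  rw [List.getD_eq_getElem _ _ hjS] at hlt
  have hbelow : ∀ y ∈ S, y < S[j] → y < nextEntry R n1 := fun y hy hyj => by
    obtain ⟨hj1, hy1⟩ := hS.succ_lt_length_of_lt_getElem hy hjS hyj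
    exact lt_of_le_of_lt hy1 (hcol (j + 1) hj1)
  rcases bumpValue_eq_some_cases hb with ⟨rfl, -, rfl⟩ | ⟨-, -, rfl⟩ | h | ⟨h, -, rfl⟩
  · omega
  · omega
  · obtain ⟨hvS, -, hv, -⟩ := largestEjectableBetween_eq_some h
    exact absurd (hbelow v hvS hlt) (by omega)
  · have hej := ejectableB_eq_false_of_largestEjectableBetween_eq_none h
      (List.getElem_mem hjS) hlt hSj
    have := hbelow _ (pred_mem_of_ejectableB_eq_false (List.getElem_mem hjS) hej) (by omega)
    omega

end bumpValue

theorem ejectableB_phiRows_self : ∀ {U : List (List ℕ)} {v : ℕ}, (∀ S ∈ U, ∀ x ∈ S, 0 < x) →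
    0 < v → ejectableB (phiRows v U).1 v = true
  | [], v, _, hv => ejectableB_cons (List.mem_singleton_self v) (by simp; omega)
  | S :: rest, v, hpos, hv => by
    rcases hmax : (S.filter fun y => decide (y ≤ v)).max? with _ | n1
    · rw [phiRows_cons_of_max?_eq_none hmax]
      refine ejectableB_cons (by simp) ?_
      simp only [List.mem_append, List.mem_singleton, not_or]
      exact ⟨fun h => by have := List.lt_of_max?_filter_le_eq_none hmax h; omega, by omega⟩
    obtain ⟨hn1S, hn1v, hn1max⟩ := List.max?_filter_le_eq_some_iff.1 hmax
    have hvS' := mem_replaceVal_of_mem v hn1S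
    by_cases hdummy : n1 = v ∧ v - 1 ∈ S
    · have hpred := hpos S List.mem_cons_self _ hdummy.2
      rw [phiRows_cons_of_bumpValue_eq_some hmax
        (bumpValue_of_eq_of_pred_mem hdummy.1 hdummy.2)]
      simp [ejectableB, hvS',
        ejectableB_phiRows_self (fun T hT => hpos T (List.mem_cons_of_mem _ hT)) hpred]
    · obtain ⟨rest', hrest'⟩ := phiRows_cons_fst_of_max?_eq_some (rest := rest) hmax
      rw [hrest']
      refine ejectableB_cons hvS' fun h => ?_
      rcases eq_or_mem_of_mem_replaceVal h with h | ⟨h, hne⟩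
      · omega
      · have := hn1max _ h (by omega)
        exact hdummy ⟨by omega, h⟩

theorem col_phiRows_le : ∀ {T : List (List ℕ)} {v j : ℕ}, IsDecreasingTableau T →
    (T.headD []).getD j 0 ≤ v → (phiRows v T).2.2.1 ≤ j + 1
  | [], _, _, _, _ => by simp [phiRows]
  | R :: rest, v, j, hT, hv => by
    simp only [List.headD_cons] at hv
    have hRj : ∀ hj : j < R.length, R[j] ≤ v := fun hj => by
      rwa [List.getD_eq_getElem _ _ hj] at hv
    rcases hmax : (R.filter fun y => decide (y ≤ v)).max? with _ | n1
    · rw [phiRows_cons_of_max?_eq_none hmax]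
      change R.length + 1 ≤ j + 1
      by_contra! h
      have := List.lt_of_max?_filter_le_eq_none hmax (List.getElem_mem (by omega : j < R.length))
      have := hRj (by omega)
      omega
    obtain ⟨hn1R, -, hn1max⟩ := List.max?_filter_le_eq_some_iff.1 hmax
    have hidx : R.idxOf n1 < R.length := List.idxOf_lt_length_iff.2 hn1R
    have hle : R.idxOf n1 ≤ j := by
      by_contra! h
      have h1 : n1 < R[j] := by
        conv_lhs => rw [← List.getElem_idxOf hidx]
        exact hT.sortedGT.getElem_lt_getElem_iff.2 h
      have := hn1max _ (List.getElem_mem _) (hRj (by omega))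
      omega
    rcases hb : bumpValue R rest v n1 with _ | w
    · rw [phiRows_cons_of_bumpValue_eq_none hmax hb]
      exact Nat.succ_le_succ hle
    · rw [phiRows_cons_of_bumpValue_eq_some hmax hb]
      exact (col_phiRows_le hT.of_cons (getD_idxOf_le_bumpValue hT hmax hb)).trans
        (Nat.succ_le_succ hle)

section replaceVal

variable {R : List ℕ} {N N' n1 n1' : ℕ}

theorem idxOf_lt_idxOf_replaceVal (hR : R.SortedGT)
    (hmax : (R.filter fun y => decide (y ≤ N)).max? = some n1) (hN : N' < N)
    (hmax' : ((replaceVal R n1 N).filter fun y => decide (y ≤ N')).max? = some n1') :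
    R.idxOf n1 < (replaceVal R n1 N).idxOf n1' := by
  have hj : R.idxOf n1 < R.length :=
    List.idxOf_lt_length_iff.2 (List.max?_filter_le_eq_some_iff.1 hmax).1
  obtain ⟨hn1', hn1'N', -⟩ := List.max?_filter_le_eq_some_iff.1 hmax'
  have hj' := List.idxOf_lt_length_iff.2 hn1'
  have hj₀ : R.idxOf n1 < (replaceVal R n1 N).length := by rwa [length_replaceVal]
  refine ((sortedGT_replaceVal hR hmax).getElem_lt_getElem_iff (hi := hj') (hj := hj₀)).1 ?_
  rw [List.getElem_idxOf hj', getElem_replaceVal hR.nodup _ _ hj, if_pos rfl]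
  omega

theorem le_nextEntry_of_replaceVal (hR : R.SortedGT)
    (hmax : (R.filter fun y => decide (y ≤ N)).max? = some n1) (hN : N' < N)
    (hmax' : ((replaceVal R n1 N).filter fun y => decide (y ≤ N')).max? = some n1') :
    n1' ≤ nextEntry R n1 := by
  have hjj' := idxOf_lt_idxOf_replaceVal hR hmax hN hmax'
  have hj' := List.idxOf_lt_length_iff.2 (List.max?_filter_le_eq_some_iff.1 hmax').1
  have hj1 : R.idxOf n1 + 1 < R.length := by rw [length_replaceVal] at hj'; omega
  have h := ((sortedGT_replaceVal hR hmax).getElem_le_getElem_iff (hi := hj')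
    (hj := by rwa [length_replaceVal])).2 hjj'
  rwa [List.getElem_idxOf, getElem_replaceVal hR.nodup _ _ hj1, if_neg (by omega),
    ← List.getD_eq_getElem _ 0] at h

end replaceVal

/-- Equality is excluded because the first insertion leaves `v₁` ejectable, so the second one
cannot pass it down by a Direct Replacement. -/
theorem bumpValue_replaceVal_lt {R : List ℕ} {rest : List (List ℕ)} {N N' n1 n1' v₁ v₂ : ℕ}
    (hT : IsDecreasingTableau (R :: rest))
    (hmax : (R.filter fun y => decide (y ≤ N)).max? = some n1)
    (hb : bumpValue R rest N n1 = some v₁) (hN : N' < N)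
    (hmax' : ((replaceVal R n1 N).filter fun y => decide (y ≤ N')).max? = some n1')
    (hb' : bumpValue (replaceVal R n1 N) (phiRows v₁ rest).1 N' n1' = some v₂) : v₂ < v₁ := by
  have hpos : ∀ x ∈ R, 0 < x := fun x hx => hT.pos hx
  have hn1R := (List.max?_filter_le_eq_some_iff.1 hmax).1
  have hn1' : nextEntry (replaceVal R n1 N) n1' < n1' :=
    nextEntry_lt (sortedGT_replaceVal hT.sortedGT hmax)
      (fun x => pos_of_mem_replaceVal hpos (by have := hpos n1 hn1R; omega))
      (List.max?_filter_le_eq_some_iff.1 hmax').1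
  have hv₂ : v₂ ≤ n1' := bumpValue_le hn1' hb'
  have hn1'_le : n1' ≤ nextEntry R n1 := le_nextEntry_of_replaceVal hT.sortedGT hmax hN hmax'
  have hv₁ : nextEntry R n1 ≤ v₁ := nextEntry_le_bumpValue (nextEntry_lt hT.sortedGT hpos hn1R) hb
  by_contra! hle
  obtain rfl : v₂ = n1' := by omega
  obtain rfl : v₁ = v₂ := by omega
  have hej := ejectableB_phiRows_self (fun S hS => hT.of_cons.2.1 S hS) (bumpValue_pos hpos hmax hb)
  rw [ejectableB_eq_false_of_bumpValue_eq_some_self hn1' hb'] at hej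
  exact Bool.false_ne_true hej

theorem col_phiRows_lt_col_phiRows_phiRows : ∀ {T : List (List ℕ)} {N N' : ℕ},
    IsDecreasingTableau T → N' < N →
      (phiRows N T).2.2.1 < (phiRows N' (phiRows N T).1).2.2.1
  | [], N, N', _, hN => by
    have : ([N].filter fun y => decide (y ≤ N')).max? = none := by simp; omega
    simp [phiRows, this]
  | R :: rest, N, N', hT, hN => by
    rcases hmax : (R.filter fun y => decide (y ≤ N)).max? with _ | n1
    · rw [phiRows_cons_of_max?_eq_none hmax, phiRows_cons_of_max?_eq_none
        (List.max?_filter_le_append_singleton_eq_none hmax hN)]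
      simp
    obtain ⟨hn1R, hn1N, -⟩ := List.max?_filter_le_eq_some_iff.1 hmax
    have hj : R.idxOf n1 < R.length := List.idxOf_lt_length_iff.2 hn1R
    have hc₁ : (phiRows N (R :: rest)).2.2.1 ≤ R.idxOf n1 + 1 := col_phiRows_le hT (by
      rwa [List.headD_cons, List.getD_eq_getElem _ _ hj, List.getElem_idxOf])
    obtain ⟨rest', hrest'⟩ := phiRows_cons_fst_of_max?_eq_some (rest := rest) hmax
    rw [hrest']
    rcases hmax' : ((replaceVal R n1 N).filter fun y => decide (y ≤ N')).max? with _ | n1'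
    · rw [phiRows_cons_of_max?_eq_none hmax']
      change _ < (replaceVal R n1 N).length + 1
      rw [length_replaceVal]
      omega
    have hjj' := idxOf_lt_idxOf_replaceVal hT.sortedGT hmax hN hmax'
    rcases hb' : bumpValue (replaceVal R n1 N) rest' N' n1' with _ | v₂
    · rw [phiRows_cons_of_bumpValue_eq_none hmax' hb']
      exact lt_of_le_of_lt hc₁ (Nat.succ_lt_succ hjj')
    rcases hb : bumpValue R rest N n1 with _ | v₁
    · have hn1'_le := le_nextEntry_of_replaceVal hT.sortedGT hmax hN hmax'
      have hn1'_pos := pos_of_mem_replaceVal (fun x hx => hT.pos hx)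
        (by have := hT.pos hn1R; omega) (List.max?_filter_le_eq_some_iff.1 hmax').1
      have hn2 := nextEntry_eq_zero_of_bumpValue_eq_none hb
      omega
    rw [phiRows_cons_of_bumpValue_eq_some hmax hb] at hrest' ⊢
    obtain rfl : rest' = (phiRows v₁ rest).1 := (List.cons.inj hrest').2.symm
    rw [phiRows_cons_of_bumpValue_eq_some hmax' hb']
    exact col_phiRows_lt_col_phiRows_phiRows hT.of_cons
      (bumpValue_replaceVal_lt hT hmax hb hN hmax' hb')

theorem statement16_general (P : List (List ℕ)) (m m' : ℕ)
    (hP : IsDecreasingTableau P)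
    (h : m' < m) :
    (phi P m).2.2.1 < (phi (phi P m).1 m').2.2.1 :=
  col_phiRows_lt_col_phiRows_phiRows hP h

/-- Pieri property of forward insertion: inserting `m` then `m' < m`
gives termination columns `c₁ < c₂`. -/
theorem statement16 (P : List (List ℕ)) (m m' : ℕ)
    (hP : IsDecreasingTableau P) (hm : 0 < m) (hm' : 0 < m')
    (h : m' < m) :
    (phi P m).2.2.1 < (phi (phi P m).1 m').2.2.1 :=
  statement16_general P m m' hP h
end
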